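/- arXiv:1203.0662 — 2 statements merged into one kernel-verified Lean document; each statement's English description precedes it below -/
import Mathlib

section
/- Let S and T be dependent 3-cutsets of G with |S ∩ T| = 1, say S ∩ T = {p}. Then G − S and G − T each have exactly two connected components. Moreover, if C is a connected component of G − S and D is a connected component of G − T such that C ∩ D = ∅, then there exist vertices u and v with S ∩ D = {u} and T ∩ C = {v}, and the vertices u and v are adjacent (so the corresponding part (C ∪ S) ∩ (D ∪ T) of the decomposition by {S, T} equals {u, v, p}). -/
namespace Paper

variable {V : Type*}

/-- `S ⊆ V(G)` is a cutset of `G`: the graph `G − S` is disconnected. -/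
def IsCutset (G : SimpleGraph V) (S : Set V) : Prop :=
  ¬ (G.induce (Sᶜ : Set V)).Connected

/-- A 3-cutset: a cutset of exactly 3 vertices. -/
def IsThreeCutset (G : SimpleGraph V) (S : Set V) : Prop :=
  S.ncard = 3 ∧ IsCutset G S

/-- `G` is triconnected: at least 4 vertices and deleting any at most 2 vertices
leaves a connected graph. -/
def IsTriconnected [Fintype V] (G : SimpleGraph V) : Prop :=
  4 ≤ Fintype.card V ∧
    ∀ X : Set V, X.ncard ≤ 2 → (G.induce (Xᶜ : Set V)).Connected

/-- `x` and `y` both survive the deletion of `R` and lie in the same connected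
component of `G − R`. -/
def ReachOutside (G : SimpleGraph V) (R : Set V) (x y : V) : Prop :=
  ∃ (hx : x ∈ (Rᶜ : Set V)) (hy : y ∈ (Rᶜ : Set V)),
    (G.induce (Rᶜ : Set V)).Reachable ⟨x, hx⟩ ⟨y, hy⟩

/-- `R` splits `X`: two vertices of `X \ R` lie in different connected components
of `G − R`. -/
def Splits (G : SimpleGraph V) (R X : Set V) : Prop :=
  ∃ x ∈ X, ∃ y ∈ X, x ∉ R ∧ y ∉ R ∧ ¬ ReachOutside G R x y

/-- Two 3-cutsets are dependent iff one splits the other. -/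
def Dependent (G : SimpleGraph V) (S T : Set V) : Prop :=
  Splits G S T ∨ Splits G T S

/-- The connected component of `G − R` containing `u` (empty if `u ∈ R`). -/
def compOutside (G : SimpleGraph V) (R : Set V) (u : V) : Set V :=
  {y | ReachOutside G R u y}

/-- `C` is a connected component of `G − R`. -/
def IsCompOutside (G : SimpleGraph V) (R : Set V) (C : Set V) : Prop :=
  ∃ u, u ∉ R ∧ C = compOutside G R u

/-!
In a triconnected graph every vertex of a 3-cutset `S` has a neighbour in every component of
`G − S`, for otherwise the two other vertices of `S` would already separate. So if `T` splits `S`,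
every component of `G − S` meets `T`: a component avoiding `T` would join, avoiding `T`, the two
vertices of `S` that `T` separates. This makes splitting symmetric, and since `S ∩ T = {p}`, the
component meets `T` inside `T \ {p} = {t₁, t₂}`, where `t₁` and `t₂` lie in different components
of `G − S`. Hence `G − S` has exactly two components, each meeting `T` in one vertex, and likewise
for `G − T`. If components `C` of `G − S` and `D` of `G − T` are disjoint and `S ∩ D = {u}`, the
neighbour of `u` in `C` cannot lie in `D`, so it lies in `T ∩ C = {v}`.
-/

open SimpleGraph

variable {G : SimpleGraph V} {R S T : Set V} {x y z : V}

lemma reachOutside_refl (h : x ∉ R) : ReachOutside G R x x := ⟨h, h, .refl _⟩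

lemma ReachOutside.symm (h : ReachOutside G R x y) : ReachOutside G R y x :=
  let ⟨hx, hy, hr⟩ := h; ⟨hy, hx, hr.symm⟩

lemma ReachOutside.trans (hxy : ReachOutside G R x y) (hyz : ReachOutside G R y z) :
    ReachOutside G R x z :=
  let ⟨hx, _, hr⟩ := hxy; let ⟨_, hz, hr'⟩ := hyz; ⟨hx, hz, hr.trans hr'⟩

lemma reachOutside_of_adj (hx : x ∉ R) (hy : y ∉ R) (h : G.Adj x y) : ReachOutside G R x y :=
  ⟨hx, hy, Adj.reachable (by simpa using h)⟩

lemma reachOutside_coe_iff {a b : (Rᶜ : Set V)} :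
    ReachOutside G R a b ↔ (G.induce (Rᶜ : Set V)).Reachable a b :=
  ⟨fun ⟨_, _, h⟩ => h, fun h => ⟨a.2, b.2, h⟩⟩

lemma ReachOutside.mem_of_closed {A : Set V}
    (hA : ∀ a b, a ∈ A → a ∉ R → b ∉ R → G.Adj a b → b ∈ A)
    (h : ReachOutside G R x y) (hx : x ∈ A) : y ∈ A := by
  obtain ⟨hx', hy', hr⟩ := h
  suffices ∀ b : (Rᶜ : Set V), Relation.ReflTransGen (G.induce Rᶜ).Adj ⟨x, hx'⟩ b → b.1 ∈ A from
    this _ (reachable_iff_reflTransGen _ _ |>.mp hr)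
  intro b hb
  induction hb with
  | refl => exact hx
  | @tail b c _ hbc ih => exact hA b c ih b.2 c.2 (by simpa using hbc)

lemma mem_compOutside_self (h : x ∉ R) : x ∈ compOutside G R x := reachOutside_refl h

lemma notMem_of_mem_compOutside (h : y ∈ compOutside G R x) : y ∉ R := h.2.1

lemma mem_compOutside_of_adj (hy : y ∈ compOutside G R x) (hz : z ∉ R) (h : G.Adj y z) :
    z ∈ compOutside G R x :=
  ReachOutside.trans hy (reachOutside_of_adj hy.2.1 hz h)

lemma reachOutside_of_mem_compOutside (hy : y ∈ compOutside G R x)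
    (hz : z ∈ compOutside G R x) : ReachOutside G R y z :=
  ReachOutside.trans (ReachOutside.symm hy) hz

lemma compOutside_subset_of_disjoint (h : Disjoint (compOutside G S x) T) :
    compOutside G S x ⊆ compOutside G T x := by
  intro y hy
  have hx : x ∉ T := h.notMem_of_mem_left (mem_compOutside_self hy.1)
  refine hy.mem_of_closed (A := {z | z ∈ compOutside G S x → z ∈ compOutside G T x}) ?_
    (fun _ => mem_compOutside_self hx) hy
  intro a b ha haS hbS hab hb
  exact mem_compOutside_of_adj (ha (mem_compOutside_of_adj hb haS hab.symm))
    (h.notMem_of_mem_left hb) hab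

lemma IsTriconnected.reachOutside [Fintype V] (htri : IsTriconnected G) (hR : R.ncard ≤ 2)
    (hx : x ∉ R) (hy : y ∉ R) : ReachOutside G R x y :=
  ⟨hx, hy, (htri.2 R hR).preconnected _ _⟩

lemma IsTriconnected.exists_adj_mem_compOutside [Fintype V] (htri : IsTriconnected G)
    (hS : S.ncard ≤ 3) {s c : V} (hs : s ∈ S) (hc : c ∉ S) :
    ∃ w ∈ compOutside G S c, G.Adj s w := by
  by_contra! h
  have hW : (S \ {s}).ncard ≤ 2 := by rw [Set.ncard_sdiff_singleton_of_mem hs]; omega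
  have hcs : ReachOutside G (S \ {s}) c s :=
    htri.reachOutside hW (fun hcW => hc hcW.1) (fun hsW => hsW.2 rfl)
  refine notMem_of_mem_compOutside
    (hcs.mem_of_closed (A := compOutside G S c) ?_ (mem_compOutside_self hc)) hs
  intro a b ha _ hb hab
  refine mem_compOutside_of_adj ha (fun hbS => ?_) hab
  obtain rfl : b = s := by by_contra hbs; exact hb ⟨hbS, hbs⟩
  exact h a ha hab.symm

lemma IsTriconnected.inter_compOutside_nonempty [Fintype V] (htri : IsTriconnected G)
    (hS : S.ncard ≤ 3) (hTS : Splits G T S) {c : V} (hc : c ∉ S) :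
    (T ∩ compOutside G S c).Nonempty := by
  obtain ⟨x, hxS, y, hyS, hxT, hyT, hxy⟩ := hTS
  by_contra hne
  have hsub : compOutside G S c ⊆ compOutside G T c := compOutside_subset_of_disjoint <|
    Set.disjoint_iff_inter_eq_empty.mpr (by rwa [Set.inter_comm, ← Set.not_nonempty_iff_eq_empty])
  obtain ⟨wx, hwx, hxwx⟩ := htri.exists_adj_mem_compOutside hS hxS hc
  obtain ⟨wy, hwy, hywy⟩ := htri.exists_adj_mem_compOutside hS hyS hc
  exact hxy (reachOutside_of_mem_compOutside (mem_compOutside_of_adj (hsub hwx) hxT hxwx.symm)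
    (mem_compOutside_of_adj (hsub hwy) hyT hywy.symm))

lemma IsTriconnected.exists_not_reachOutside [Fintype V] (htri : IsTriconnected G)
    (hS : S.ncard ≤ 3) (hcut : IsCutset G S) : ∃ a b, a ∉ S ∧ b ∉ S ∧ ¬ ReachOutside G S a b := by
  obtain ⟨a, ha⟩ : ∃ a, a ∉ S := by
    by_contra! h
    rw [Set.eq_univ_of_forall h, Set.ncard_univ, Nat.card_eq_fintype_card] at hS
    have := htri.1
    omega
  have : Nonempty (Sᶜ : Set V) := ⟨⟨a, ha⟩⟩
  have hpre : ¬ (G.induce (Sᶜ : Set V)).Preconnected := fun hpre => hcut ⟨hpre⟩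
  simp only [Preconnected, not_forall] at hpre
  obtain ⟨a, b, hab⟩ := hpre
  exact ⟨a, b, a.2, b.2, fun h => hab (reachOutside_coe_iff.mp h)⟩

lemma IsTriconnected.splits_symm [Fintype V] (htri : IsTriconnected G) (hS : S.ncard ≤ 3)
    (hcut : IsCutset G S) (hTS : Splits G T S) : Splits G S T := by
  obtain ⟨a, b, ha, hb, hab⟩ := htri.exists_not_reachOutside hS hcut
  obtain ⟨x, hxT, hxa⟩ := htri.inter_compOutside_nonempty hS hTS ha
  obtain ⟨y, hyT, hyb⟩ := htri.inter_compOutside_nonempty hS hTS hb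
  exact ⟨x, hxT, y, hyT, hxa.2.1, hyb.2.1,
    fun hxy => hab (hxa.trans (hxy.trans (ReachOutside.symm hyb)))⟩

lemma IsTriconnected.splits_and_splits_of_dependent [Fintype V] (htri : IsTriconnected G)
    (hS : IsThreeCutset G S) (hT : IsThreeCutset G T) (h : Dependent G S T) :
    Splits G S T ∧ Splits G T S := by
  rcases h with h | h
  exacts [⟨h, htri.splits_symm hT.1.le hT.2 h⟩, ⟨htri.splits_symm hS.1.le hS.2 h, h⟩]

lemma eq_triple_of_ncard_eq_three {s : Set V} (hs : s.ncard = 3) {a b c : V} (ha : a ∈ s)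
    (hb : b ∈ s) (hc : c ∈ s) (hab : a ≠ b) (hac : a ≠ c) (hbc : b ≠ c) : s = {a, b, c} := by
  refine (Set.eq_of_subset_of_ncard_le ?_ ?_ (Set.finite_of_ncard_ne_zero (by omega))).symm
  · simp [Set.insert_subset_iff, ha, hb, hc]
  · rw [hs, Set.ncard_eq_three.mpr ⟨a, b, c, hab, hac, hbc, rfl⟩]

lemma inter_eq_singleton_of_eq_triple {T C : Set V} {p a b : V} (hT : T = {p, a, b})
    (hp : p ∉ C) (ha : a ∈ C) (hb : b ∉ C) : T ∩ C = {a} := by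
  subst hT
  ext z
  simp only [Set.mem_inter_iff, Set.mem_insert_iff, Set.mem_singleton_iff]
  constructor
  · rintro ⟨rfl | rfl | rfl, hz⟩ <;> tauto
  · rintro rfl; tauto

lemma card_connectedComponent_eq_two {t₁ t₂ : V} (ht₁ : t₁ ∉ R) (ht₂ : t₂ ∉ R)
    (h₁₂ : ¬ ReachOutside G R t₁ t₂)
    (h : ∀ c ∉ R, t₁ ∈ compOutside G R c ∨ t₂ ∈ compOutside G R c) :
    Nat.card (G.induce (Rᶜ : Set V)).ConnectedComponent = 2 := by
  rw [Nat.card_eq_two_iff]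
  refine ⟨connectedComponentMk _ ⟨t₁, ht₁⟩, connectedComponentMk _ ⟨t₂, ht₂⟩,
    fun h' => h₁₂ (reachOutside_coe_iff.mpr (ConnectedComponent.eq.mp h')), ?_⟩
  ext K
  induction K using ConnectedComponent.ind with
  | h c =>
    simp only [Set.mem_insert_iff, Set.mem_singleton_iff, Set.mem_univ, iff_true,
      ConnectedComponent.eq]
    exact (h c c.2).imp reachOutside_coe_iff.mp reachOutside_coe_iff.mp

lemma IsTriconnected.card_eq_two_and_inter_compOutside_eq_singleton [Fintype V]
    (htri : IsTriconnected G) (hS : S.ncard ≤ 3) (hT : T.ncard = 3) {p : V}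
    (hp : S ∩ T = {p}) (hST : Splits G S T) (hTS : Splits G T S) :
    Nat.card (G.induce (Sᶜ : Set V)).ConnectedComponent = 2 ∧
      ∀ c ∉ S, ∃ v, T ∩ compOutside G S c = {v} := by
  obtain ⟨t₁, ht₁, t₂, ht₂, ht₁S, ht₂S, h₁₂⟩ := hST
  have hpST : p ∈ S ∩ T := hp ▸ rfl
  have hT' : T = {p, t₁, t₂} :=
    eq_triple_of_ncard_eq_three hT hpST.2 ht₁ ht₂ (ne_of_mem_of_not_mem hpST.1 ht₁S)
      (ne_of_mem_of_not_mem hpST.1 ht₂S) (fun h => h₁₂ (h ▸ reachOutside_refl ht₁S))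
  have hC : ∀ c ∉ S, T ∩ compOutside G S c = {t₁} ∨ T ∩ compOutside G S c = {t₂} := by
    intro c hc
    have hpC : p ∉ compOutside G S c := fun h => notMem_of_mem_compOutside h hpST.1
    obtain ⟨t, htT, htC⟩ := htri.inter_compOutside_nonempty hS hTS hc
    rw [hT'] at htT
    rcases htT with rfl | rfl | rfl
    · exact absurd htC hpC
    · exact .inl <| inter_eq_singleton_of_eq_triple hT' hpC htC
        fun h => h₁₂ (reachOutside_of_mem_compOutside htC h)
    · exact .inr <| inter_eq_singleton_of_eq_triple (by rw [hT', Set.pair_comm]) hpC htC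
        fun h => h₁₂ (reachOutside_of_mem_compOutside h htC)
  refine ⟨card_connectedComponent_eq_two ht₁S ht₂S h₁₂ fun c hc => ?_,
    fun c hc => (hC c hc).elim (⟨t₁, ·⟩) (⟨t₂, ·⟩)⟩
  exact (hC c hc).imp (fun h => (Set.eq_singleton_iff_unique_mem.mp h).1.2)
    (fun h => (Set.eq_singleton_iff_unique_mem.mp h).1.2)

lemma IsTriconnected.adj_of_inter_eq_empty [Fintype V] (htri : IsTriconnected G)
    (hS : S.ncard ≤ 3) {c d u v : V} (hc : c ∉ S)
    (hCD : compOutside G S c ∩ compOutside G T d = ∅) (hu : S ∩ compOutside G T d = {u})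
    (hv : T ∩ compOutside G S c = {v}) : G.Adj u v := by
  obtain ⟨⟨huS, huD⟩, -⟩ := Set.eq_singleton_iff_unique_mem.mp hu
  obtain ⟨w, hwC, huw⟩ := htri.exists_adj_mem_compOutside hS huS hc
  have hwT : w ∈ T := by
    by_contra hwT
    exact (hCD.subset ⟨hwC, mem_compOutside_of_adj huD hwT huw⟩ :)
  obtain rfl : w = v := hv.subset ⟨hwT, hwC⟩
  exact huw

lemma union_inter_union_eq_triple {S T C D : Set V} {p u v : V} (hCD : C ∩ D = ∅)
    (hu : S ∩ D = {u}) (hv : T ∩ C = {v}) (hp : S ∩ T = {p}) :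
    (C ∪ S) ∩ (D ∪ T) = {u, v, p} := by
  rw [Set.union_inter_distrib_right, Set.inter_union_distrib_left, Set.inter_union_distrib_left,
    hCD, Set.inter_comm C T, hv, hu, hp, Set.empty_union, Set.union_comm {v}, Set.union_assoc,
    Set.singleton_union, Set.singleton_union, Set.pair_comm p v]

theorem stmt_2_general [Fintype V] (G : SimpleGraph V)
    (htri : IsTriconnected G)
    (S T : Set V) (hS : IsThreeCutset G S) (hT : IsThreeCutset G T)
    (hdep : Dependent G S T) (p : V) (hp : S ∩ T = {p}) :
    Nat.card (G.induce (Sᶜ : Set V)).ConnectedComponent = 2 ∧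
    Nat.card (G.induce (Tᶜ : Set V)).ConnectedComponent = 2 ∧
    ∀ C D : Set V, IsCompOutside G S C → IsCompOutside G T D → C ∩ D = ∅ →
      ∃ u v : V, S ∩ D = {u} ∧ T ∩ C = {v} ∧ G.Adj u v ∧
        (C ∪ S) ∩ (D ∪ T) = {u, v, p} := by
  obtain ⟨hST, hTS⟩ := htri.splits_and_splits_of_dependent hS hT hdep
  obtain ⟨hcardS, hCT⟩ :=
    htri.card_eq_two_and_inter_compOutside_eq_singleton hS.1.le hT.1 hp hST hTS
  obtain ⟨hcardT, hDS⟩ := htri.card_eq_two_and_inter_compOutside_eq_singleton hT.1.le hS.1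
    (by rwa [Set.inter_comm]) hTS hST
  refine ⟨hcardS, hcardT, ?_⟩
  rintro C D ⟨c, hc, rfl⟩ ⟨d, hd, rfl⟩ hCD
  obtain ⟨u, hu⟩ := hDS d hd
  obtain ⟨v, hv⟩ := hCT c hc
  exact ⟨u, v, hu, hv, htri.adj_of_inter_eq_empty hS.1.le hc hCD hu hv,
    union_inter_union_eq_triple hCD hu hv hp⟩

/-- Corollary 3: dependent 3-cutsets sharing exactly one vertex `p`. -/
theorem stmt_2 [Fintype V] (G : SimpleGraph V)
    (htri : IsTriconnected G) (hbig : 6 < Fintype.card V)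
    (S T : Set V) (hS : IsThreeCutset G S) (hT : IsThreeCutset G T)
    (hdep : Dependent G S T) (p : V) (hp : S ∩ T = {p}) :
    Nat.card (G.induce (Sᶜ : Set V)).ConnectedComponent = 2 ∧
    Nat.card (G.induce (Tᶜ : Set V)).ConnectedComponent = 2 ∧
    ∀ C D : Set V, IsCompOutside G S C → IsCompOutside G T D → C ∩ D = ∅ →
      ∃ u v : V, S ∩ D = {u} ∧ T ∩ C = {v} ∧ G.Adj u v ∧
        (C ∪ S) ∩ (D ∪ T) = {u, v, p} :=
  stmt_2_general G htri S T hS hT hdep p hp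

end Paper
end

section
/- For vertices x_1, x_2 ∈ V(G) the following two statements are equivalent. (1) x_1 and x_2 are adjacent and the edge x_1x_2 is singular. (2) There exist dependent 3-cutsets S and T with S ∩ T = ∅, x_1 ∈ S and x_2 ∈ T such that, denoting by C the connected component of G − S containing x_2 and by D the connected component of G − T containing x_1, one has C ∩ D = ∅, T ∩ C = {x_2} and S ∩ D = {x_1} (i.e., {x_1, x_2} is a part of the decomposition of G by {S, T}). -/
namespace Paper

variable {V : Type*}

/-- The graph obtained from `G` by deleting the vertices of `A` (with all incident
edges) and the edges of `E`. -/
def DelVE (G : SimpleGraph V) (A : Set V) (E : Set (Sym2 V)) : SimpleGraph (Aᶜ : Set V) :=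
  (G.deleteEdges E).induce (Aᶜ : Set V)

/-- The mixed set of vertices `A` and edges `E` disconnects `G`. -/
def CutVE (G : SimpleGraph V) (A : Set V) (E : Set (Sym2 V)) : Prop :=
  ¬ (DelVE G A E).Connected

/-- `x` and `y` survive the deletion and lie in the same connected component of
the graph obtained by deleting the vertices of `A` and the edges of `E`. -/
def ReachVE (G : SimpleGraph V) (A : Set V) (E : Set (Sym2 V)) (x y : V) : Prop :=
  ∃ (hx : x ∈ (Aᶜ : Set V)) (hy : y ∈ (Aᶜ : Set V)),
    (DelVE G A E).Reachable ⟨x, hx⟩ ⟨y, hy⟩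

/-- The connected component of `G − (A ∪ E)` containing `u`. -/
def compVE (G : SimpleGraph V) (A : Set V) (E : Set (Sym2 V)) (u : V) : Set V :=
  {y | ReachVE G A E u y}

/-- `C` is a connected component of the graph obtained from `G` by deleting the
vertices of `A` and the edges of `E`. -/
def IsCompVE (G : SimpleGraph V) (A : Set V) (E : Set (Sym2 V)) (C : Set V) : Prop :=
  ∃ u, u ∉ A ∧ C = compVE G A E u

/-- The edge `x₁x₂` is singular: it lies in two cuts of `𝔐₁(G)` whose vertex
pairs are disjoint. -/
def SingularEdge (G : SimpleGraph V) (x₁ x₂ : V) : Prop :=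
  ∃ u v t w : V, u ≠ v ∧ u ≠ t ∧ u ≠ w ∧ v ≠ t ∧ v ≠ w ∧ t ≠ w ∧
    CutVE G {u, v} {s(x₁, x₂)} ∧ CutVE G {t, w} {s(x₁, x₂)}

/-!
Deleting a pair `A` and the edge `x₁x₂` from a triconnected graph leaves exactly two sides
`P₁ ∋ x₁` and `P₂ ∋ x₂`. Given two such cuts with disjoint pairs `A`, `B` and sides `P`, `Q`,
the quadrant `P₁ ∩ Q₁` can only be left through `x₂`, `A ∩ Q₁` and `B ∩ P₁`, and symmetrically
for `P₂ ∩ Q₂`. These two borders partition the six vertices of `A ∪ B ∪ {x₁, x₂}`, and by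
triconnectivity neither has fewer than three elements, so both are 3-cutsets and the quadrants
give the decomposition.

Conversely, if `S ∋ x₁` and `T ∋ x₂` decompose `G` with `{x₁, x₂}` a part, the only edge
between `x₁` and the component `C` of `x₂` is `x₁x₂`, so `S \ {x₁}` together with that edge
separates `C` from `x₁`; symmetrically for `T`.
-/

variable {G : SimpleGraph V}

section Reach

variable {A : Set V} {E : Set (Sym2 V)} {x y z : V}

@[simp]
lemma delVE_adj {a b : (Aᶜ : Set V)} :
    (DelVE G A E).Adj a b ↔ G.Adj a b ∧ s((a : V), b) ∉ E := by
  simp [DelVE]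

lemma ReachVE.refl (hx : x ∉ A) : ReachVE G A E x x := ⟨hx, hx, .rfl⟩

lemma ReachVE.symm (h : ReachVE G A E x y) : ReachVE G A E y x :=
  ⟨h.2.1, h.1, h.2.2.symm⟩

lemma ReachVE.trans (h : ReachVE G A E x y) (h' : ReachVE G A E y z) : ReachVE G A E x z :=
  ⟨h.1, h'.2.1, h.2.2.trans h'.2.2⟩

lemma ReachVE.of_adj (h : G.Adj x y) (hx : x ∉ A) (hy : y ∉ A) (he : s(x, y) ∉ E) :
    ReachVE G A E x y :=
  ⟨hx, hy, (delVE_adj.2 ⟨h, he⟩).reachable⟩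

lemma reachOutside_iff_reachVE : ReachOutside G A x y ↔ ReachVE G A ∅ x y := by
  simp [ReachOutside, ReachVE, DelVE]

lemma compOutside_eq_compVE : compOutside G A x = compVE G A ∅ x :=
  Set.ext fun _ => reachOutside_iff_reachVE

lemma isCutset_of_not_reachOutside (hx : x ∉ A) (hy : y ∉ A) (h : ¬ ReachOutside G A x y) :
    IsCutset G A :=
  fun hc => h ⟨hx, hy, hc.preconnected _ _⟩

end Reach

def IsClosedVE (G : SimpleGraph V) (A : Set V) (E : Set (Sym2 V)) (Z : Set V) : Prop :=
  ∀ ⦃p q⦄, p ∈ Z → G.Adj p q → q ∉ A → s(p, q) ∉ E → q ∈ Z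

section Closed

variable {A Z : Set V} {E : Set (Sym2 V)} {x y : V}

lemma IsClosedVE.mem_of_reachVE (hZ : IsClosedVE G A E Z) (hx : x ∈ Z)
    (h : ReachVE G A E x y) : y ∈ Z := by
  obtain ⟨_, _, ⟨w⟩⟩ := h
  suffices ∀ {a b : (Aᶜ : Set V)}, (DelVE G A E).Walk a b → (a : V) ∈ Z → (b : V) ∈ Z from
    this w hx
  intro a b w
  induction w with
  | nil => exact id
  | @cons _ c _ hac _ ih =>
    exact fun ha => ih (hZ ha (delVE_adj.1 hac).1 c.2 (delVE_adj.1 hac).2)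

lemma IsClosedVE.cutVE (hZ : IsClosedVE G A E Z) (hx : x ∈ Z) (hxA : x ∉ A) (hyA : y ∉ A)
    (hyZ : y ∉ Z) : CutVE G A E :=
  fun hc => hyZ (hZ.mem_of_reachVE hx ⟨hxA, hyA, hc.preconnected _ _⟩)

lemma isClosedVE_compVE : IsClosedVE G A E (compVE G A E x) :=
  fun _ _ hp hpq hq he => hp.trans (.of_adj hpq hp.2.1 hq he)

end Closed

section Triconnected

variable [Fintype V] {A : Set V} {x x₁ x₂ : V}

lemma IsTriconnected.compl_subset_of_isClosedVE (htri : IsTriconnected G) {X Z : Set V}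
    (hX : X.ncard ≤ 2) (hZ : IsClosedVE G X ∅ Z) (hx : x ∈ Z) (hxX : x ∉ X) : Xᶜ ⊆ Z :=
  fun _ hy => hZ.mem_of_reachVE hx
    (reachOutside_iff_reachVE.1 ⟨hxX, hy, (htri.2 X hX).preconnected _ _⟩)

/-- `G − A` is connected, so the cut must delete a genuine edge of `G − A`. -/
lemma IsTriconnected.adj_of_cutVE (htri : IsTriconnected G) (hA : A.ncard ≤ 2)
    (h : CutVE G A {s(x₁, x₂)}) : G.Adj x₁ x₂ ∧ x₁ ∉ A ∧ x₂ ∉ A := by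
  by_contra hne
  refine h ?_
  convert htri.2 A hA using 1
  ext a b
  simp only [delVE_adj, Set.mem_singleton_iff, SimpleGraph.comap_adj,
    Function.Embedding.subtype_apply, and_iff_left_iff_imp]
  intro hab he
  rcases Sym2.eq_iff.1 he with ⟨rfl, rfl⟩ | ⟨rfl, rfl⟩
  · exact hne ⟨hab, a.2, b.2⟩
  · exact hne ⟨hab.symm, b.2, a.2⟩

end Triconnected

structure IsCutSides (G : SimpleGraph V) (A : Set V) (x₁ x₂ : V) (P₁ P₂ : Set V) : Prop where
  left_mem : x₁ ∈ P₁
  right_mem : x₂ ∈ P₂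
  disjoint : Disjoint P₁ P₂
  union_eq : P₁ ∪ P₂ = Aᶜ
  isClosedVE_left : IsClosedVE G A {s(x₁, x₂)} P₁
  isClosedVE_right : IsClosedVE G A {s(x₁, x₂)} P₂

namespace IsCutSides

variable {A P₁ P₂ : Set V} {x₁ x₂ : V}

lemma symm (h : IsCutSides G A x₁ x₂ P₁ P₂) : IsCutSides G A x₂ x₁ P₂ P₁ where
  left_mem := h.right_mem
  right_mem := h.left_mem
  disjoint := h.disjoint.symm
  union_eq := by rw [Set.union_comm, h.union_eq]
  isClosedVE_left := by rw [Sym2.eq_swap]; exact h.isClosedVE_right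
  isClosedVE_right := by rw [Sym2.eq_swap]; exact h.isClosedVE_left

lemma left_notMem (h : IsCutSides G A x₁ x₂ P₁ P₂) : x₁ ∉ A := by
  have hx₁ : x₁ ∈ P₁ ∪ P₂ := .inl h.left_mem
  rwa [h.union_eq] at hx₁

lemma mem_or_mem (h : IsCutSides G A x₁ x₂ P₁ P₂) {z : V} (hz : z ∉ A) : z ∈ P₁ ∨ z ∈ P₂ := by
  rwa [← Set.mem_union, h.union_eq]

end IsCutSides

lemma reachVE_or_of_walk {A : Set V} {x₁ x₂ : V} {p q : (Aᶜ : Set V)}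
    (w : (G.induce Aᶜ).Walk p q) :
    ReachVE G A {s(x₁, x₂)} q p ∨ ReachVE G A {s(x₁, x₂)} q x₁ ∨
      ReachVE G A {s(x₁, x₂)} q x₂ := by
  induction w with
  | @nil u => exact .inl (.refl u.2)
  | @cons p r q hpr _ ih =>
    rcases ih with hr | h | h
    · by_cases he : s((p : V), r) = s(x₁, x₂)
      · rcases Sym2.eq_iff.1 he with ⟨-, hr₂⟩ | ⟨-, hr₁⟩
        · exact .inr (.inr (hr₂ ▸ hr))
        · exact .inr (.inl (hr₁ ▸ hr))
      · exact .inl (hr.trans (.of_adj (SimpleGraph.comap_adj.1 hpr).symm r.2 p.2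
          (by simpa [Sym2.eq_swap] using he)))
    · exact .inr (.inl h)
    · exact .inr (.inr h)

lemma IsTriconnected.exists_isCutSides [Fintype V] (htri : IsTriconnected G) {A : Set V}
    {x₁ x₂ : V} (hA : A.ncard ≤ 2) (h : CutVE G A {s(x₁, x₂)}) :
    ∃ P₁ P₂, IsCutSides G A x₁ x₂ P₁ P₂ := by
  obtain ⟨-, hx₁, hx₂⟩ := htri.adj_of_cutVE hA h
  have hreach : ∀ z ∉ A,
      ReachVE G A {s(x₁, x₂)} x₁ z ∨ ReachVE G A {s(x₁, x₂)} x₂ z := by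
    intro z hz
    obtain ⟨w⟩ := (htri.2 A hA).preconnected ⟨x₁, hx₁⟩ ⟨z, hz⟩
    rcases reachVE_or_of_walk w with hr | hr | hr
    exacts [.inl hr.symm, .inl hr.symm, .inr hr.symm]
  refine ⟨compVE G A {s(x₁, x₂)} x₁, compVE G A {s(x₁, x₂)} x₂,
    .refl hx₁, .refl hx₂, Set.disjoint_left.2 fun z h₁ h₂ => h ?_, ?_,
    isClosedVE_compVE, isClosedVE_compVE⟩
  · have h₂₁ : ReachVE G A {s(x₁, x₂)} x₂ x₁ := h₂.trans h₁.symm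
    refine (SimpleGraph.connected_iff_exists_forall_reachable _).2 ⟨⟨x₂, hx₂⟩, fun z => ?_⟩
    rcases hreach z z.2 with h' | h'
    exacts [(h₂₁.trans h').2.2, h'.2.2]
  · ext z
    refine ⟨?_, hreach z⟩
    rintro (h' | h') <;> exact h'.2.1

/-- The vertices of `A ∪ B ∪ {x₁, x₂}` bounding the quadrant `P ∩ Q`, where `P`, `Q` are the
sides of the cuts `A ∪ {x₁x₂}`, `B ∪ {x₁x₂}` and `x` is the endpoint outside the quadrant. -/
def quadrantBorder (A B P Q : Set V) (x : V) : Set V :=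
  insert x (A ∩ Q ∪ B ∩ P)

section Quadrant

variable {A B P₁ P₂ Q₁ Q₂ : Set V} {x₁ x₂ : V}

lemma isClosedVE_inter_quadrantBorder (hP : IsCutSides G A x₁ x₂ P₁ P₂)
    (hQ : IsCutSides G B x₁ x₂ Q₁ Q₂) (hAB : Disjoint A B) :
    IsClosedVE G (quadrantBorder A B P₁ Q₁ x₂) ∅ (P₁ ∩ Q₁) := by
  rintro p q ⟨hpP, hpQ⟩ hpq hq -
  simp only [quadrantBorder, Set.mem_insert_iff, Set.mem_union, Set.mem_inter_iff, not_or,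
    not_and] at hq
  obtain ⟨hqx₂, hqAQ, hqBP⟩ := hq
  have he : s(p, q) ∉ ({s(x₁, x₂)} : Set (Sym2 V)) := by
    intro he
    rcases Sym2.eq_iff.1 he with ⟨-, rfl⟩ | ⟨rfl, -⟩
    · exact hqx₂ rfl
    · exact Set.disjoint_left.1 hP.disjoint hpP hP.right_mem
  have hqA : q ∉ A := fun hqA =>
    hqAQ hqA (hQ.isClosedVE_left hpQ hpq (Set.disjoint_left.1 hAB hqA) he)
  have hqP : q ∈ P₁ := hP.isClosedVE_left hpP hpq hqA he
  exact ⟨hqP, hQ.isClosedVE_left hpQ hpq (fun hqB => hqBP hqB hqP) he⟩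

lemma compOutside_subset_inter (hP : IsCutSides G A x₁ x₂ P₁ P₂)
    (hQ : IsCutSides G B x₁ x₂ Q₁ Q₂) (hAB : Disjoint A B) :
    compOutside G (quadrantBorder A B P₁ Q₁ x₂) x₁ ⊆ P₁ ∩ Q₁ := fun _ hz =>
  (isClosedVE_inter_quadrantBorder hP hQ hAB).mem_of_reachVE ⟨hP.left_mem, hQ.left_mem⟩
    (reachOutside_iff_reachVE.1 hz)

lemma notMem_inter_of_mem_quadrantBorder (hP : IsCutSides G A x₁ x₂ P₁ P₂)
    (hQ : IsCutSides G B x₁ x₂ Q₁ Q₂) {z : V} (hz : z ∈ quadrantBorder A B P₂ Q₂ x₁)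
    (hzx : z ≠ x₁) : z ∉ P₁ ∩ Q₁ := by
  rintro ⟨hzP, hzQ⟩
  rcases (Set.mem_insert_iff.1 hz).resolve_left hzx with ⟨-, hzQ₂⟩ | ⟨-, hzP₂⟩
  · exact Set.disjoint_left.1 hQ.disjoint hzQ hzQ₂
  · exact Set.disjoint_left.1 hP.disjoint hzP hzP₂

lemma disjoint_quadrantBorder (hP : IsCutSides G A x₁ x₂ P₁ P₂)
    (hQ : IsCutSides G B x₁ x₂ Q₁ Q₂) (hAB : Disjoint A B) :
    Disjoint (quadrantBorder A B P₁ Q₁ x₂) (quadrantBorder A B P₂ Q₂ x₁) := by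
  have hx₁₂ : x₁ ≠ x₂ := fun h => Set.disjoint_left.1 hP.disjoint hP.left_mem (h ▸ hP.right_mem)
  have := hP.left_notMem; have := hP.symm.left_notMem
  have := hQ.left_notMem; have := hQ.symm.left_notMem
  rw [Set.disjoint_left]
  intro z h₁ h₂
  have : z ∈ A → z ∉ B := fun h => Set.disjoint_left.1 hAB h
  have : z ∈ P₁ → z ∉ P₂ := fun h => Set.disjoint_left.1 hP.disjoint h
  have : z ∈ Q₁ → z ∉ Q₂ := fun h => Set.disjoint_left.1 hQ.disjoint h
  simp only [quadrantBorder, Set.mem_insert_iff, Set.mem_union, Set.mem_inter_iff] at h₁ h₂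
  rcases h₁ with rfl | h₁ <;> rcases h₂ with rfl | h₂ <;> tauto

lemma quadrantBorder_union_quadrantBorder (hP : IsCutSides G A x₁ x₂ P₁ P₂)
    (hQ : IsCutSides G B x₁ x₂ Q₁ Q₂) (hAB : Disjoint A B) :
    quadrantBorder A B P₁ Q₁ x₂ ∪ quadrantBorder A B P₂ Q₂ x₁ = insert x₁ (insert x₂ (A ∪ B)) := by
  ext z
  have hA : z ∈ A → z ∈ Q₁ ∨ z ∈ Q₂ := fun hz => hQ.mem_or_mem (Set.disjoint_left.1 hAB hz)
  have hB : z ∈ B → z ∈ P₁ ∨ z ∈ P₂ := fun hz => hP.mem_or_mem (Set.disjoint_right.1 hAB hz)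
  simp only [quadrantBorder, Set.mem_insert_iff, Set.mem_union, Set.mem_inter_iff]
  tauto

lemma ncard_quadrantBorder_add_ncard [Finite V] (hP : IsCutSides G A x₁ x₂ P₁ P₂)
    (hQ : IsCutSides G B x₁ x₂ Q₁ Q₂) (hAB : Disjoint A B) :
    (quadrantBorder A B P₁ Q₁ x₂).ncard + (quadrantBorder A B P₂ Q₂ x₁).ncard =
      A.ncard + B.ncard + 2 := by
  have hx₁₂ : x₁ ≠ x₂ := fun h => Set.disjoint_left.1 hP.disjoint hP.left_mem (h ▸ hP.right_mem)
  rw [← Set.ncard_union_eq (disjoint_quadrantBorder hP hQ hAB),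
    quadrantBorder_union_quadrantBorder hP hQ hAB, Set.ncard_insert_of_notMem,
    Set.ncard_insert_of_notMem, Set.ncard_union_eq hAB]
  · simp [hP.symm.left_notMem, hQ.symm.left_notMem]
  · simp [hx₁₂, hP.left_notMem, hQ.left_notMem]

/-- With at most two border vertices, triconnectivity forces every other vertex into the
quadrant `P₁ ∩ Q₁`. -/
lemma quadrantBorder_subset_singleton [Fintype V] (htri : IsTriconnected G)
    (hP : IsCutSides G A x₁ x₂ P₁ P₂) (hQ : IsCutSides G B x₁ x₂ Q₁ Q₂) (hAB : Disjoint A B)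
    (h : (quadrantBorder A B P₁ Q₁ x₂).ncard ≤ 2) : quadrantBorder A B P₂ Q₂ x₁ ⊆ {x₁} := by
  have hdisj := Set.disjoint_right.1 (disjoint_quadrantBorder hP hQ hAB)
  intro z hz
  by_contra hzx
  exact notMem_inter_of_mem_quadrantBorder hP hQ hz hzx
    (htri.compl_subset_of_isClosedVE h (isClosedVE_inter_quadrantBorder hP hQ hAB)
      ⟨hP.left_mem, hQ.left_mem⟩ (hdisj (Set.mem_insert _ _)) (hdisj hz))

lemma ncard_quadrantBorder_eq_three [Fintype V] (htri : IsTriconnected G)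
    (hP : IsCutSides G A x₁ x₂ P₁ P₂) (hQ : IsCutSides G B x₁ x₂ Q₁ Q₂) (hAB : Disjoint A B)
    (hA : A.ncard = 2) (hB : B.ncard = 2) :
    (quadrantBorder A B P₁ Q₁ x₂).ncard = 3 ∧ (quadrantBorder A B P₂ Q₂ x₁).ncard = 3 := by
  have hsum := ncard_quadrantBorder_add_ncard hP hQ hAB
  have h₁ := quadrantBorder_subset_singleton htri hP hQ hAB
  have h₂ := quadrantBorder_subset_singleton htri hP.symm hQ.symm hAB
  have hle {S : Set V} {a : V} (h : S ⊆ {a}) : S.ncard ≤ 1 :=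
    (Set.ncard_le_ncard h).trans (Set.ncard_singleton a).le
  by_cases h₁' : (quadrantBorder A B P₁ Q₁ x₂).ncard ≤ 2
  · have := hle (h₁ h₁'); omega
  by_cases h₂' : (quadrantBorder A B P₂ Q₂ x₁).ncard ≤ 2
  · have := hle (h₂ h₂'); omega
  omega

lemma not_reachOutside_quadrantBorder (hP : IsCutSides G A x₁ x₂ P₁ P₂)
    (hQ : IsCutSides G B x₁ x₂ Q₁ Q₂) (hAB : Disjoint A B) {y : V}
    (hy : y ∈ quadrantBorder A B P₂ Q₂ x₁) (hyx : y ≠ x₁) :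
    ¬ ReachOutside G (quadrantBorder A B P₁ Q₁ x₂) x₁ y := fun h =>
  notMem_inter_of_mem_quadrantBorder hP hQ hy hyx (compOutside_subset_inter hP hQ hAB h)

lemma quadrantBorder_inter_compOutside (hP : IsCutSides G A x₁ x₂ P₁ P₂)
    (hQ : IsCutSides G B x₁ x₂ Q₁ Q₂) (hAB : Disjoint A B) :
    quadrantBorder A B P₂ Q₂ x₁ ∩ compOutside G (quadrantBorder A B P₁ Q₁ x₂) x₁ = {x₁} := by
  ext z
  refine ⟨fun ⟨hz, hzD⟩ => ?_, ?_⟩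
  · by_contra hzx
    exact not_reachOutside_quadrantBorder hP hQ hAB hz hzx hzD
  · rintro rfl
    have hx₁ := Set.disjoint_right.1 (disjoint_quadrantBorder hP hQ hAB) (Set.mem_insert _ _)
    exact ⟨Set.mem_insert _ _, hx₁, hx₁, .rfl⟩

theorem exists_decomposition_of_cutVE [Fintype V] (htri : IsTriconnected G) (hA : A.ncard = 2)
    (hB : B.ncard = 2) (hAB : Disjoint A B) (hcutA : CutVE G A {s(x₁, x₂)})
    (hcutB : CutVE G B {s(x₁, x₂)}) :
    ∃ S T : Set V, IsThreeCutset G S ∧ IsThreeCutset G T ∧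
      Dependent G S T ∧ S ∩ T = ∅ ∧ x₁ ∈ S ∧ x₂ ∈ T ∧
      compOutside G S x₂ ∩ compOutside G T x₁ = ∅ ∧
      T ∩ compOutside G S x₂ = {x₂} ∧
      S ∩ compOutside G T x₁ = {x₁} := by
  obtain ⟨P₁, P₂, hP⟩ := htri.exists_isCutSides hA.le hcutA
  obtain ⟨Q₁, Q₂, hQ⟩ := htri.exists_isCutSides hB.le hcutB
  have hTS := disjoint_quadrantBorder hP hQ hAB
  obtain ⟨hT3, hS3⟩ := ncard_quadrantBorder_eq_three htri hP hQ hAB hA hB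
  set S := quadrantBorder A B P₂ Q₂ x₁
  set T := quadrantBorder A B P₁ Q₁ x₂
  obtain ⟨s, hsS, hs⟩ := Set.exists_ne_of_one_lt_ncard (by omega : 1 < S.ncard) x₁
  obtain ⟨t, htT, ht⟩ := Set.exists_ne_of_one_lt_ncard (by omega : 1 < T.ncard) x₂
  have hx₁T : x₁ ∉ T := Set.disjoint_right.1 hTS (Set.mem_insert _ _)
  have hx₂S : x₂ ∉ S := Set.disjoint_left.1 hTS (Set.mem_insert _ _)
  have hC := not_reachOutside_quadrantBorder hP.symm hQ.symm hAB htT ht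
  refine ⟨S, T, ⟨hS3, isCutset_of_not_reachOutside hx₂S (Set.disjoint_left.1 hTS htT) hC⟩,
    ⟨hT3, isCutset_of_not_reachOutside hx₁T (Set.disjoint_right.1 hTS hsS)
      (not_reachOutside_quadrantBorder hP hQ hAB hsS hs)⟩,
    .inl ⟨x₂, Set.mem_insert _ _, t, htT, hx₂S, Set.disjoint_left.1 hTS htT, hC⟩,
    Set.disjoint_iff_inter_eq_empty.1 hTS.symm, Set.mem_insert _ _, Set.mem_insert _ _,
    Set.disjoint_iff_inter_eq_empty.1 ?_, quadrantBorder_inter_compOutside hP.symm hQ.symm hAB,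
    quadrantBorder_inter_compOutside hP hQ hAB⟩
  exact (hP.disjoint.symm.mono Set.inter_subset_left Set.inter_subset_left).mono
    (compOutside_subset_inter hP.symm hQ.symm hAB) (compOutside_subset_inter hP hQ hAB)

end Quadrant

/-- An edge from the component `C` of `x₂` to `x₁` other than `x₁x₂` would join `C` to the
component `D` of `x₁`. -/
lemma cutVE_diff_singleton {S T : Set V} {x₁ x₂ : V} (hx₁S : x₁ ∈ S) (hx₁T : x₁ ∉ T)
    (hCD : compOutside G S x₂ ∩ compOutside G T x₁ = ∅)
    (hTC : T ∩ compOutside G S x₂ = {x₂}) : CutVE G (S \ {x₁}) {s(x₁, x₂)} := by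
  simp only [compOutside_eq_compVE] at hCD hTC
  have hx₂C : x₂ ∈ compVE G S ∅ x₂ := (hTC.symm ▸ Set.mem_singleton x₂ : x₂ ∈ T ∩ _).2
  have hC : IsClosedVE G (S \ {x₁}) {s(x₁, x₂)} (compVE G S ∅ x₂) := by
    intro p q hp hpq hq he
    by_cases hqx₁ : q = x₁
    · subst hqx₁
      have hpx₂ : p ≠ x₂ := by
        rintro rfl
        exact he (by simp [Sym2.eq_swap])
      have hpT : p ∉ T := fun hpT => hpx₂ (hTC ▸ ⟨hpT, hp⟩ : p ∈ ({x₂} : Set V))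
      have hpD : p ∈ compVE G T ∅ q := ReachVE.of_adj hpq.symm hx₁T hpT (Set.notMem_empty _)
      exact (Set.eq_empty_iff_forall_notMem.1 hCD p ⟨hp, hpD⟩).elim
    · exact hp.trans (.of_adj hpq hp.2.1 (by simpa [hqx₁] using hq) (Set.notMem_empty _))
  exact hC.cutVE hx₂C (fun h => hx₂C.2.1 h.1) (fun h => h.2 rfl) (fun h => h.2.1 hx₁S)

lemma singularEdge_iff {x₁ x₂ : V} :
    SingularEdge G x₁ x₂ ↔ ∃ A B : Set V, A.ncard = 2 ∧ B.ncard = 2 ∧ Disjoint A B ∧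
      CutVE G A {s(x₁, x₂)} ∧ CutVE G B {s(x₁, x₂)} := by
  constructor
  · rintro ⟨u, v, t, w, huv, hut, huw, hvt, hvw, htw, hA, hB⟩
    exact ⟨{u, v}, {t, w}, Set.ncard_pair huv, Set.ncard_pair htw,
      by simp [hut.symm, hvt.symm, huw.symm, hvw.symm], hA, hB⟩
  · rintro ⟨A, B, hA, hB, hAB, hcutA, hcutB⟩
    obtain ⟨u, v, huv, rfl⟩ := Set.ncard_eq_two.1 hA
    obtain ⟨t, w, htw, rfl⟩ := Set.ncard_eq_two.1 hB
    simp only [Set.disjoint_insert_left, Set.disjoint_singleton_left, Set.mem_insert_iff,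
      Set.mem_singleton_iff, not_or] at hAB
    exact ⟨u, v, t, w, huv, hAB.1.1, hAB.1.2, hAB.2.1, hAB.2.2, htw, hcutA, hcutB⟩

theorem stmt_10_general [Fintype V] (G : SimpleGraph V)
    (htri : IsTriconnected G)
    (x₁ x₂ : V) :
    (G.Adj x₁ x₂ ∧ SingularEdge G x₁ x₂) ↔
      (∃ S T : Set V, IsThreeCutset G S ∧ IsThreeCutset G T ∧
        Dependent G S T ∧ S ∩ T = ∅ ∧ x₁ ∈ S ∧ x₂ ∈ T ∧
        compOutside G S x₂ ∩ compOutside G T x₁ = ∅ ∧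
        T ∩ compOutside G S x₂ = {x₂} ∧
        S ∩ compOutside G T x₁ = {x₁}) := by
  rw [singularEdge_iff]
  constructor
  · rintro ⟨-, A, B, hA, hB, hAB, hcutA, hcutB⟩
    exact exists_decomposition_of_cutVE htri hA hB hAB hcutA hcutB
  · rintro ⟨S, T, ⟨hS3, -⟩, ⟨hT3, -⟩, -, hST, hx₁S, hx₂T, hCD, hTC, hSD⟩
    have hST' : Disjoint S T := Set.disjoint_iff_inter_eq_empty.2 hST
    have hcutS := cutVE_diff_singleton hx₁S (Set.disjoint_left.1 hST' hx₁S) hCD hTC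
    have hcutT : CutVE G (T \ {x₂}) {s(x₁, x₂)} := by
      rw [Sym2.eq_swap]
      exact cutVE_diff_singleton hx₂T (Set.disjoint_right.1 hST' hx₂T)
        (by rwa [Set.inter_comm]) hSD
    have hS2 : (S \ {x₁}).ncard = 2 := by rw [Set.ncard_sdiff_singleton_of_mem hx₁S, hS3]
    have hT2 : (T \ {x₂}).ncard = 2 := by rw [Set.ncard_sdiff_singleton_of_mem hx₂T, hT3]
    exact ⟨(htri.adj_of_cutVE hS2.le hcutS).1, S \ {x₁}, T \ {x₂}, hS2, hT2,
      hST'.mono Set.sdiff_subset Set.sdiff_subset, hcutS, hcutT⟩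

/-- Theorem 2: `x₁x₂` is a singular edge iff `{x₁, x₂}` is a small part of the
decomposition of `G` by a pair of dependent disjoint 3-cutsets. -/
theorem stmt_10 [Fintype V] (G : SimpleGraph V)
    (htri : IsTriconnected G) (hbig : 6 < Fintype.card V)
    (x₁ x₂ : V) :
    (G.Adj x₁ x₂ ∧ SingularEdge G x₁ x₂) ↔
      (∃ S T : Set V, IsThreeCutset G S ∧ IsThreeCutset G T ∧
        Dependent G S T ∧ S ∩ T = ∅ ∧ x₁ ∈ S ∧ x₂ ∈ T ∧
        compOutside G S x₂ ∩ compOutside G T x₁ = ∅ ∧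
        T ∩ compOutside G S x₂ = {x₂} ∧
        S ∩ compOutside G T x₁ = {x₁}) :=
  stmt_10_general G htri x₁ x₂

end Paper
end
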